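/- If g ∈ GL(n,E) and K is a simplicial complex on [n], then the union over all k of the partial shifts Δ_g(K^(k)) of the k-dimensional face sets of K forms a simplicial complex; i.e., if σ ∈ Δ_g(K^(k)) and ρ ⊂ σ with |ρ| = |σ| − 1, then ρ ∈ Δ_g(K^(k−1)), so that Δ_g(K) is closed under taking subsets. -/
import Mathlib


open Classical

/-- The type of `k`-element subsets of `[n] = {1, …, n}` (modeled as `Fin n`). -/
abbrev KSub (n k : ℕ) := {s : Finset (Fin n) // s.card = k}

/-- Strict lexicographic order: `S <_lex T` iff `S ≠ T` and `min (S ∆ T) ∈ S`. -/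
def lexLT {n k : ℕ} (σ τ : KSub n k) : Prop :=
  σ ≠ τ ∧ ∃ a ∈ σ.1, (symmDiff σ.1 τ.1).min = (a : WithTop (Fin n))

variable {E : Type*} [Field E]

/-- The `k`-th compound matrix of an `n × n` matrix `g`: its `(σ, τ)` entry is the
determinant of the `k × k` submatrix of `g` with rows `σ` and columns `τ`. -/
noncomputable def compound {n : ℕ} (g : Matrix (Fin n) (Fin n) E) (k : ℕ) :
    Matrix (KSub n k) (KSub n k) E :=
  fun σ τ => (Matrix.of fun i j : Fin k =>
    g (σ.1.orderEmbOfFin σ.2 i) (τ.1.orderEmbOfFin τ.2 j)).det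

/-- The column of the submatrix `g^{∧S}` of the `k`-th compound matrix of `g`
(rows indexed by `S`) indexed by `σ`. -/
noncomputable def shiftCol {n k : ℕ} (g : Matrix (Fin n) (Fin n) E)
    (S : Finset (KSub n k)) (σ : KSub n k) : {ρ // ρ ∈ S} → E :=
  fun r => compound g k r.1 σ

/-- The partial shift `Δ_g(S)` of a `k`-uniform hypergraph `S ⊆ C([n],k)` by `g`:
the set of `σ` such that the column of `g^{∧S}` indexed by `σ` is not in the span of
the columns indexed by lexicographically smaller subsets. -/
noncomputable def shift {n k : ℕ} (g : Matrix (Fin n) (Fin n) E)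
    (S : Finset (KSub n k)) : Finset (KSub n k) :=
  Finset.univ.filter fun σ =>
    shiftCol g S σ ∉ Submodule.span E {v | ∃ ρ, lexLT ρ σ ∧ v = shiftCol g S ρ}

/-- The `c`-uniform hypergraph of faces of cardinality `c` of a simplicial complex `K`
(for `c = k + 1` this is the set `K^{(k)}` of `k`-dimensional faces). -/
noncomputable def faces {n : ℕ} (K : Set (Finset (Fin n))) (c : ℕ) : Finset (KSub n c) :=
  Finset.univ.filter fun σ => σ.1 ∈ K

/-- The shifted complex `Δ_g(K)`: the union over all `k` of the partial shifts
`Δ_g(K^{(k)})` of the `k`-dimensional face sets, together with the empty set. -/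
def shiftComplex {n : ℕ} (g : Matrix (Fin n) (Fin n) E) (K : Set (Finset (Fin n))) :
    Set (Finset (Fin n)) :=
  {s | s = ∅ ∨ ∃ (c : ℕ) (σ : KSub n c), σ ∈ shift g (faces K c) ∧ s = σ.1}

namespace ShiftAux

variable {n k : ℕ}

/-- Columns: the sorted columns of `υ` followed by `m` at the last position. -/
noncomputable def colsFun (m : Fin n) (υ : KSub n k) : Fin (k + 1) → Fin n :=
  fun b => if h : (b : ℕ) < k then υ.1.orderEmbOfFin υ.2 ⟨b, h⟩ else m

/-- The determinant of the matrix with rows `r` and columns `υ` followed by `m`. -/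
noncomputable def Dmat (g : Matrix (Fin n) (Fin n) E) (m : Fin n) (υ : KSub n k)
    (r : KSub n (k + 1)) : E :=
  (Matrix.of fun a b : Fin (k + 1) => g (r.1.orderEmbOfFin r.2 a) (colsFun m υ b)).det

/-- Erasing the `a`-th element of a `(k+1)`-set gives a `k`-set. -/
noncomputable def eraseK (r : KSub n (k + 1)) (a : Fin (k + 1)) : KSub n k :=
  ⟨r.1.erase (r.1.orderEmbOfFin r.2 a), by
    rw [Finset.card_erase_of_mem (Finset.orderEmbOfFin_mem _ _ _), r.2]
    omega⟩

lemma orderEmb_erase (r : KSub n (k + 1)) (a : Fin (k + 1)) (x : Fin k) :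
    (eraseK r a).1.orderEmbOfFin (eraseK r a).2 x = r.1.orderEmbOfFin r.2 (a.succAbove x) := by
  have hmono : StrictMono (fun x : Fin k => r.1.orderEmbOfFin r.2 (a.succAbove x)) :=
    (r.1.orderEmbOfFin r.2).strictMono.comp (Fin.strictMono_succAbove a)
  have hfs : ∀ x : Fin k, r.1.orderEmbOfFin r.2 (a.succAbove x) ∈ (eraseK r a).1 := by
    intro x
    refine Finset.mem_erase.2 ⟨fun hEq => ?_, Finset.orderEmbOfFin_mem _ _ _⟩
    exact Fin.succAbove_ne a x ((r.1.orderEmbOfFin r.2).injective hEq)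
  exact (congrFun (Finset.orderEmbOfFin_unique (eraseK r a).2 hfs hmono) x).symm

lemma colsFun_castSucc (m : Fin n) (υ : KSub n k) (j : Fin k) :
    colsFun m υ (Fin.castSucc j) = υ.1.orderEmbOfFin υ.2 j := by
  have hj : ((Fin.castSucc j : Fin (k + 1)) : ℕ) < k := by
    simpa using j.isLt
  have hjj : (⟨((Fin.castSucc j : Fin (k + 1)) : ℕ), hj⟩ : Fin k) = j := by
    ext
    simp
  simp only [colsFun, dif_pos hj, hjj]

lemma colsFun_last (m : Fin n) (υ : KSub n k) :
    colsFun m υ (Fin.last k) = m := by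
  simp [colsFun]

/-- Laplace expansion of `Dmat` along its last column. -/
lemma Dmat_expand (g : Matrix (Fin n) (Fin n) E) (m : Fin n) (υ : KSub n k)
    (r : KSub n (k + 1)) :
    Dmat g m υ r = ∑ a : Fin (k + 1),
      (-1) ^ ((a : ℕ) + k) * g (r.1.orderEmbOfFin r.2 a) m * compound g k (eraseK r a) υ := by
  rw [Dmat, Matrix.det_succ_column _ (Fin.last k)]
  refine Finset.sum_congr rfl fun a _ => ?_
  have h2 : (Matrix.of fun a b : Fin (k + 1) =>
      g (r.1.orderEmbOfFin r.2 a) (colsFun m υ b)) a (Fin.last k)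
        = g (r.1.orderEmbOfFin r.2 a) m := by
    simp [colsFun_last]
  have h3 : ((Matrix.of fun a b : Fin (k + 1) =>
      g (r.1.orderEmbOfFin r.2 a) (colsFun m υ b)).submatrix a.succAbove
        (Fin.last k).succAbove).det = compound g k (eraseK r a) υ := by
    rw [compound]
    congr 1
    ext i j
    simp only [Matrix.submatrix_apply, Matrix.of_apply, Fin.succAbove_last]
    rw [orderEmb_erase, colsFun_castSucc]
  rw [h2, h3]
  norm_num [Fin.val_last]

/-- If `m` already belongs to `υ`, the matrix has two equal columns. -/
lemma Dmat_eq_zero (g : Matrix (Fin n) (Fin n) E) (m : Fin n) (υ : KSub n k)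
    (hm : m ∈ υ.1) (r : KSub n (k + 1)) : Dmat g m υ r = 0 := by
  obtain ⟨b, hb⟩ : ∃ b : Fin k, υ.1.orderEmbOfFin υ.2 b = m := by
    have hmem : m ∈ Set.range (υ.1.orderEmbOfFin υ.2) := by
      rw [Finset.range_orderEmbOfFin]; exact hm
    obtain ⟨b, hb⟩ := hmem
    exact ⟨b, hb⟩
  refine Matrix.det_zero_of_column_eq (i := Fin.castSucc b) (j := Fin.last k)
    (Fin.castSucc_lt_last b).ne fun a => ?_
  simp [colsFun_castSucc, colsFun_last, hb]

lemma colsFun_mem (m : Fin n) (υ : KSub n k) (b : Fin (k + 1)) :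
    colsFun m υ b ∈ insert m υ.1 := by
  by_cases h : (b : ℕ) < k
  · simp only [colsFun, dif_pos h]
    exact Finset.mem_insert_of_mem (Finset.orderEmbOfFin_mem _ _ _)
  · simp only [colsFun, dif_neg h]
    exact Finset.mem_insert_self _ _

lemma colsFun_injective (m : Fin n) (υ : KSub n k) (hm : m ∉ υ.1) :
    Function.Injective (colsFun m υ) := by
  intro b₁ b₂ h
  by_cases h₁ : (b₁ : ℕ) < k <;> by_cases h₂ : (b₂ : ℕ) < k
  · simp only [colsFun, dif_pos h₁, dif_pos h₂] at h
    have h2 : (b₁ : ℕ) = (b₂ : ℕ) := by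
      simpa using congrArg Fin.val ((υ.1.orderEmbOfFin υ.2).injective h)
    exact Fin.ext h2
  · simp only [colsFun, dif_pos h₁, dif_neg h₂] at h
    exact absurd (h ▸ Finset.orderEmbOfFin_mem υ.1 υ.2 ⟨b₁, h₁⟩) hm
  · simp only [colsFun, dif_neg h₁, dif_pos h₂] at h
    exact absurd (h ▸ Finset.orderEmbOfFin_mem υ.1 υ.2 ⟨b₂, h₂⟩) hm
  · ext
    omega

/-- If `m ∉ υ`, then `Dmat g m υ r` equals `±1` times the compound-matrix entry for the
column `υ ∪ {m}`, with a sign independent of `r`. -/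
lemma Dmat_sign (g : Matrix (Fin n) (Fin n) E) (m : Fin n) (υ : KSub n k)
    (hm : m ∉ υ.1) :
    ∃ ε : E, (ε = 1 ∨ ε = -1) ∧ ∀ r : KSub n (k + 1),
      Dmat g m υ r = ε * compound g (k + 1) r
        ⟨insert m υ.1, by rw [Finset.card_insert_of_notMem hm, υ.2]⟩ := by
  set w : KSub n (k + 1) :=
    ⟨insert m υ.1, by rw [Finset.card_insert_of_notMem hm, υ.2]⟩ with hwdef
  have hmem : ∀ b, colsFun m υ b ∈ w.1 := fun b => colsFun_mem m υ b
  let f : Fin (k + 1) → {x // x ∈ w.1} := fun b => ⟨colsFun m υ b, hmem b⟩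
  have hfinj : Function.Injective f := fun a b hab =>
    colsFun_injective m υ hm (congrArg Subtype.val hab)
  have hbij : Function.Bijective f := by
    rw [Fintype.bijective_iff_injective_and_card]
    have hcard : Fintype.card {x // x ∈ w.1} = k + 1 := by
      rw [Fintype.card_coe, w.2]
    exact ⟨hfinj, by rw [Fintype.card_fin, hcard]⟩
  let e := Equiv.ofBijective f hbij
  let π : Equiv.Perm (Fin (k + 1)) := e.trans (w.1.orderIsoOfFin w.2).toEquiv.symm
  have hπ : ∀ b, w.1.orderEmbOfFin w.2 (π b) = colsFun m υ b := by
    intro b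
    have h1 : ((w.1.orderIsoOfFin w.2) (π b) : Fin n) = ((e b : {x // x ∈ w.1}) : Fin n) :=
      congrArg Subtype.val (Equiv.apply_symm_apply (w.1.orderIsoOfFin w.2).toEquiv (e b))
    rw [← Finset.coe_orderIsoOfFin_apply]
    exact h1
  refine ⟨((Equiv.Perm.sign π : ℤ) : E), ?_, ?_⟩
  · rcases Int.units_eq_one_or (Equiv.Perm.sign π) with h | h <;> rw [h] <;> simp
  · intro r
    have hmat : (Matrix.of fun a b : Fin (k + 1) =>
        g (r.1.orderEmbOfFin r.2 a) (colsFun m υ b))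
        = (Matrix.of fun a b : Fin (k + 1) =>
            g (r.1.orderEmbOfFin r.2 a) (w.1.orderEmbOfFin w.2 b)).submatrix id π := by
      ext a b
      simp [Matrix.submatrix_apply, hπ]
    rw [Dmat, hmat, Matrix.det_permute' π, compound]

lemma lexLT_insert {τ ρ : KSub n k} (m : Fin n) (hmτ : m ∉ τ.1) (hmρ : m ∉ ρ.1)
    (h : lexLT τ ρ) :
    lexLT (⟨insert m τ.1, by rw [Finset.card_insert_of_notMem hmτ, τ.2]⟩ : KSub n (k + 1))
      ⟨insert m ρ.1, by rw [Finset.card_insert_of_notMem hmρ, ρ.2]⟩ := by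
  obtain ⟨hne, a, ha, hmin⟩ := h
  have hsd : symmDiff (insert m τ.1) (insert m ρ.1) = symmDiff τ.1 ρ.1 := by
    ext x
    by_cases hx : x = m <;>
      simp only [Finset.mem_symmDiff, Finset.mem_insert, hx] <;> tauto
  refine ⟨fun hEq => ?_, a, Finset.mem_insert_of_mem ha, ?_⟩
  · have h1 : insert m τ.1 = insert m ρ.1 := congrArg Subtype.val hEq
    have h2 : τ.1 = ρ.1 := by
      rw [← Finset.erase_insert hmτ, ← Finset.erase_insert hmρ, h1]
    exact hne (Subtype.ext h2)
  · show (symmDiff (insert m τ.1) (insert m ρ.1)).min = (a : WithTop (Fin n))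
    rw [hsd]
    exact hmin

lemma mem_faces_iff {K : Set (Finset (Fin n))} {c : ℕ} (σ : KSub n c) :
    σ ∈ faces K c ↔ σ.1 ∈ K := by
  simp [faces]

lemma mem_shift_iff (g : Matrix (Fin n) (Fin n) E) (S : Finset (KSub n k)) (σ : KSub n k) :
    σ ∈ shift g S ↔
      shiftCol g S σ ∉ Submodule.span E {v | ∃ ρ, lexLT ρ σ ∧ v = shiftCol g S ρ} := by
  simp [shift]

/-- The key step: one-element-removal closure of the shifted complex. -/
lemma step (g : Matrix (Fin n) (Fin n) E) {K : Set (Finset (Fin n))}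
    (hK : ∀ s ∈ K, ∀ t ⊆ s, t ∈ K) (σ : KSub n (k + 1))
    (hσ : σ ∈ shift g (faces K (k + 1))) (t : Finset (Fin n)) (hts : t ⊆ σ.1)
    (htc : t.card = k) :
    (⟨t, htc⟩ : KSub n k) ∈ shift g (faces K k) := by
  classical
  -- find the extra element m
  obtain ⟨m, hmdiff⟩ : ∃ m, σ.1 \ t = {m} := by
    rw [← Finset.card_eq_one, Finset.card_sdiff_of_subset hts, σ.2, htc]
    omega
  have hm : m ∉ t := by
    have := hmdiff ▸ Finset.mem_singleton_self m
    exact (Finset.mem_sdiff.mp this).2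
  have hins : insert m t = σ.1 := by
    apply Finset.eq_of_subset_of_card_le
    · refine Finset.insert_subset ?_ hts
      have := hmdiff ▸ Finset.mem_singleton_self m
      exact (Finset.mem_sdiff.mp this).1
    · rw [σ.2, Finset.card_insert_of_notMem hm, htc]
  set ρ : KSub n k := ⟨t, htc⟩ with hρdef
  have hσ' : σ = ⟨insert m t, by rw [Finset.card_insert_of_notMem hm, htc]⟩ :=
    Subtype.ext hins.symm
  rw [mem_shift_iff]
  intro hmem
  -- ρ's column is a combination of earlier columns
  rw [Submodule.mem_span_set'] at hmem
  obtain ⟨N, f, v, hv⟩ := hmem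
  choose τ hτlex hτval using fun i => (v i).2
  -- the pointwise form of the combination
  have H : ∀ (q : KSub n k), q.1 ∈ K →
      compound g k q ρ = ∑ i, f i * compound g k q (τ i) := by
    intro q hq
    have hqf : q ∈ faces K k := (mem_faces_iff q).mpr hq
    have := congrFun hv (⟨q, hqf⟩ : {x // x ∈ faces K k})
    rw [Finset.sum_apply] at this
    calc compound g k q ρ = shiftCol g (faces K k) ρ ⟨q, hqf⟩ := rfl
    _ = ∑ i, (f i • ((v i : _) : {x // x ∈ faces K k} → E)) ⟨q, hqf⟩ := this.symm
    _ = ∑ i, f i * compound g k q (τ i) := by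
        refine Finset.sum_congr rfl fun i _ => ?_
        rw [Pi.smul_apply, smul_eq_mul, hτval i]
        rfl
  -- transfer the combination to the level above
  have claim1 : ∀ (r : KSub n (k + 1)), r.1 ∈ K →
      Dmat g m ρ r = ∑ i, f i * Dmat g m (τ i) r := by
    intro r hr
    have herase : ∀ a : Fin (k + 1), (eraseK r a).1 ∈ K :=
      fun a => hK r.1 hr _ (Finset.erase_subset _ _)
    rw [Dmat_expand]
    calc ∑ a : Fin (k + 1),
          (-1) ^ ((a : ℕ) + k) * g (r.1.orderEmbOfFin r.2 a) m * compound g k (eraseK r a) ρ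
        = ∑ a : Fin (k + 1), ∑ i, f i * ((-1) ^ ((a : ℕ) + k) * g (r.1.orderEmbOfFin r.2 a) m
            * compound g k (eraseK r a) (τ i)) := by
          refine Finset.sum_congr rfl fun a _ => ?_
          rw [H (eraseK r a) (herase a), Finset.mul_sum]
          refine Finset.sum_congr rfl fun i _ => ?_
          ring
    _ = ∑ i, ∑ a : Fin (k + 1), f i * ((-1) ^ ((a : ℕ) + k) * g (r.1.orderEmbOfFin r.2 a) m
            * compound g k (eraseK r a) (τ i)) := Finset.sum_comm
    _ = ∑ i, f i * Dmat g m (τ i) r := by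
          refine Finset.sum_congr rfl fun i _ => ?_
          rw [Dmat_expand, Finset.mul_sum]
  -- the sign for ρ itself
  obtain ⟨ε, hε, hεeq⟩ := Dmat_sign g m ρ hm
  have hεne : ε ≠ 0 := by
    rcases hε with h | h <;> rw [h] <;> simp
  -- the family of vectors
  set SP : Submodule E ({x // x ∈ faces K (k + 1)} → E) :=
    Submodule.span E {v | ∃ ρ', lexLT ρ' σ ∧ v = shiftCol g (faces K (k + 1)) ρ'} with hSP
  have claim2 : ∀ i, (fun r : {x // x ∈ faces K (k + 1)} =>
      Dmat g m (τ i) r.1) ∈ SP := by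
    intro i
    by_cases hmi : m ∈ (τ i).1
    · have : (fun r : {x // x ∈ faces K (k + 1)} => Dmat g m (τ i) r.1)
          = (0 : {x // x ∈ faces K (k + 1)} → E) := by
        funext r
        exact Dmat_eq_zero g m (τ i) hmi r.1
      rw [this]
      exact Submodule.zero_mem _
    · obtain ⟨ε', _, hε'eq⟩ := Dmat_sign g m (τ i) hmi
      have hlex : lexLT
          (⟨insert m (τ i).1, by rw [Finset.card_insert_of_notMem hmi, (τ i).2]⟩ :
            KSub n (k + 1)) σ := by
        rw [hσ']
        exact lexLT_insert m hmi hm (hτlex i)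
      have : (fun r : {x // x ∈ faces K (k + 1)} => Dmat g m (τ i) r.1)
          = ε' • shiftCol g (faces K (k + 1))
              ⟨insert m (τ i).1, by rw [Finset.card_insert_of_notMem hmi, (τ i).2]⟩ := by
        funext r
        rw [Pi.smul_apply, smul_eq_mul]
        exact hε'eq r.1
      rw [this]
      exact Submodule.smul_mem _ _ (Submodule.subset_span ⟨_, hlex, rfl⟩)
  -- express σ's column as a combination
  have claim3 : shiftCol g (faces K (k + 1)) σ
      = ∑ i, (ε⁻¹ * f i) • (fun r : {x // x ∈ faces K (k + 1)} =>
          Dmat g m (τ i) r.1) := by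
    funext r
    have hrK : r.1.1 ∈ K := (mem_faces_iff r.1).mp r.2
    have h1 : Dmat g m ρ r.1 = ε * compound g (k + 1) r.1 σ := by
      rw [hεeq r.1, hσ']
    have h2 : compound g (k + 1) r.1 σ = ε⁻¹ * Dmat g m ρ r.1 := by
      rw [h1, inv_mul_cancel_left₀ hεne]
    calc shiftCol g (faces K (k + 1)) σ r = compound g (k + 1) r.1 σ := rfl
    _ = ε⁻¹ * Dmat g m ρ r.1 := h2
    _ = ε⁻¹ * ∑ i, f i * Dmat g m (τ i) r.1 := by rw [claim1 r.1 hrK]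
    _ = ∑ i, (ε⁻¹ * f i) * Dmat g m (τ i) r.1 := by
        rw [Finset.mul_sum]
        refine Finset.sum_congr rfl fun i _ => ?_
        ring
    _ = (∑ i, (ε⁻¹ * f i) • (fun r : {x // x ∈ faces K (k + 1)} =>
          Dmat g m (τ i) r.1)) r := by
        rw [Finset.sum_apply]
        rfl
  -- contradiction with hσ
  rw [mem_shift_iff] at hσ
  exact hσ (claim3 ▸ Submodule.sum_mem _ fun i _ => Submodule.smul_mem _ _ (claim2 i))

end ShiftAux

/-- If `K` is a simplicial complex on `[n]` and `g` is invertible, then `Δ_g(K)`, the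
union of the partial shifts of the face sets of `K` of the various dimensions (together
with the empty set), is again a simplicial complex, i.e. closed under taking subsets. -/
theorem shiftComplex_isComplex {n : ℕ} (g : Matrix (Fin n) (Fin n) E) (hg : IsUnit g)
    (K : Set (Finset (Fin n))) (hne : K.Nonempty)
    (hK : ∀ s ∈ K, ∀ t ⊆ s, t ∈ K) :
    ∀ s ∈ shiftComplex g K, ∀ t ⊆ s, t ∈ shiftComplex g K := by
  have down : ∀ (c : ℕ) (σ : KSub n c), σ ∈ shift g (faces K c) →
      ∀ t ⊆ σ.1, t ∈ shiftComplex g K := by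
    intro c
    induction c with
    | zero =>
      intro σ _ t ht
      have hσ : σ.1 = ∅ := Finset.card_eq_zero.mp σ.2
      have : t = ∅ := Finset.subset_empty.mp (hσ ▸ ht)
      exact Or.inl this
    | succ k ih =>
      intro σ hσ t ht
      by_cases hcard : t.card = k + 1
      · have : t = σ.1 := Finset.eq_of_subset_of_card_le ht (by rw [σ.2, hcard])
        exact Or.inr ⟨k + 1, σ, hσ, this⟩
      · have htle : t.card ≤ k := by
          have := Finset.card_le_card ht
          rw [σ.2] at this
          omega
        obtain ⟨t', htt', ht'σ, ht'c⟩ :=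
          Finset.exists_subsuperset_card_eq ht htle (by rw [σ.2]; omega)
        exact ih ⟨t', ht'c⟩ (ShiftAux.step g hK σ hσ t' ht'σ ht'c) t htt'
  intro s hs t hts
  rcases hs with hs | ⟨c, σ, hσ, rfl⟩
  · exact Or.inl (Finset.subset_empty.mp (hs ▸ hts))
  · exact down c σ hσ t hts
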